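/- arXiv:2404.08843 — 2 statements merged into one kernel-verified Lean document; each statement's English description precedes it below -/
import Mathlib

section
/- A variety W of type τ (without nullary operations) is term idempotent if and only if, for every algebra A of type τ, every class of the W-replica congruence ϱ of A which is not an idempotent element of A/ϱ is a singleton. -/
structure Alg (Ω : Type) (ar : Ω → ℕ) : Type 1 where
  carrier : Type
  interp : ∀ ω : Ω, (Fin (ar ω) → carrier) → carrier

inductive Term (Ω : Type) (ar : Ω → ℕ) (X : Type) : Type
  | var : X → Term Ω ar X
  | op : (ω : Ω) → (Fin (ar ω) → Term Ω ar X) → Term Ω ar X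

variable {Ω : Type} {ar : Ω → ℕ} {X Y : Type}

def Term.eval (A : Alg Ω ar) (v : X → A.carrier) : Term Ω ar X → A.carrier
  | .var x => v x
  | .op ω ts => A.interp ω fun i => (ts i).eval A v

def Term.subst (σ : X → Term Ω ar Y) : Term Ω ar X → Term Ω ar Y
  | .var x => σ x
  | .op ω ts => .op ω fun i => (ts i).subst σ

def Term.varSet : Term Ω ar X → Set X
  | .var x => {x}
  | .op _ ts => ⋃ i, (ts i).varSet

def Satisfies (A : Alg Ω ar) (p q : Term Ω ar X) : Prop :=
  ∀ v : X → A.carrier, p.eval A v = q.eval A v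

/-- `V ⊨ p = q` for a class of algebras `V`. -/
def VSat (V : Alg Ω ar → Prop) (p q : Term Ω ar X) : Prop :=
  ∀ A, V A → Satisfies A p q

/-- `p` is a term idempotent of `V`: `V ⊨ ω(p,…,p) = p` for every basic operation `ω`. -/
def TermIdem (V : Alg Ω ar → Prop) (p : Term Ω ar X) : Prop :=
  ∀ ω : Ω, VSat V (Term.op ω fun _ => p) p

/-- `V` is a term idempotent variety: both sides of every nontrivial identity it
satisfies are term idempotents of `V`. -/
def TermIdemVariety (V : Alg Ω ar → Prop) : Prop :=
  ∀ p q : Term Ω ar ℕ, VSat V p q → p ≠ q → TermIdem V p ∧ TermIdem V q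

def Models (A : Alg Ω ar) (E : Set (Term Ω ar ℕ × Term Ω ar ℕ)) : Prop :=
  ∀ e ∈ E, Satisfies A e.1 e.2

/-- The variety (equational class) defined by the set of identities `E`. -/
def VarietyOf (E : Set (Term Ω ar ℕ × Term Ω ar ℕ)) : Alg Ω ar → Prop :=
  fun A => Models A E

structure IsCongr (A : Alg Ω ar) (r : A.carrier → A.carrier → Prop) : Prop where
  refl : ∀ a, r a a
  symm : ∀ {a b}, r a b → r b a
  trans : ∀ {a b c}, r a b → r b c → r a c
  compat : ∀ (ω : Ω) (f g : Fin (ar ω) → A.carrier),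
    (∀ i, r (f i) (g i)) → r (A.interp ω f) (A.interp ω g)

/-- Quotient algebra of `A` by a (congruence) relation `r`. -/
noncomputable def Alg.quot (A : Alg Ω ar) (r : A.carrier → A.carrier → Prop) : Alg Ω ar where
  carrier := Quot r
  interp := fun ω f => Quot.mk r (A.interp ω fun i => (f i).out)

/-- `r` is the `W`-replica congruence of `A`: the smallest congruence whose quotient lies in `W`. -/
def IsReplica (W : Alg Ω ar → Prop) (A : Alg Ω ar) (r : A.carrier → A.carrier → Prop) : Prop :=
  IsCongr A r ∧ W (A.quot r) ∧
    ∀ s : A.carrier → A.carrier → Prop, IsCongr A s → W (A.quot s) →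
      ∀ a b, r a b → s a b

/-- The `r`-class of `a` is a subalgebra of `A`. -/
def ClassIsSub (A : Alg Ω ar) (r : A.carrier → A.carrier → Prop) (a : A.carrier) : Prop :=
  ∀ (ω : Ω) (f : Fin (ar ω) → A.carrier), (∀ i, r (f i) a) → r (A.interp ω f) a

/-- The `r`-class of `a` viewed as an algebra. -/
def classAlg (A : Alg Ω ar) (r : A.carrier → A.carrier → Prop) (a : A.carrier)
    (h : ClassIsSub A r a) : Alg Ω ar where
  carrier := {b : A.carrier // r b a}
  interp := fun ω f => ⟨A.interp ω fun i => (f i).1, h ω _ fun i => (f i).2⟩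

/-- The Mal'tsev product `V ∘ W`. -/
def MalProd (V W : Alg Ω ar → Prop) (A : Alg Ω ar) : Prop :=
  ∀ r : A.carrier → A.carrier → Prop, IsReplica W A r →
    ∀ (a : A.carrier) (h : ClassIsSub A r a), V (classAlg A r a h)

structure Hom (A B : Alg Ω ar) where
  toFun : A.carrier → B.carrier
  map : ∀ ω f, toFun (A.interp ω f) = B.interp ω fun i => toFun (f i)

def IsIdem (A : Alg Ω ar) (a : A.carrier) : Prop :=
  ∀ ω : Ω, A.interp ω (fun _ => a) = a

section Aux

variable {Ω : Type} {ar : Ω → ℕ} {X Y : Type}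

lemma subst_eval (A : Alg Ω ar) (σ : X → Term Ω ar Y) (v : Y → A.carrier) :
    ∀ t : Term Ω ar X, (t.subst σ).eval A v = t.eval A (fun x => (σ x).eval A v)
  | .var _ => rfl
  | .op ω ts => congrArg _ (funext fun i => subst_eval A σ v (ts i))

lemma congr_of_mk_eq {A : Alg Ω ar} {r : A.carrier → A.carrier → Prop} (hr : IsCongr A r)
    {x y : A.carrier} (h : Quot.mk r x = Quot.mk r y) : r x y := by
  have h' := Quot.eq.mp h
  clear h
  induction h' with
  | rel _ _ h => exact h
  | refl _ => exact hr.refl _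
  | symm _ _ _ ih => exact hr.symm ih
  | trans _ _ _ _ _ ih1 ih2 => exact hr.trans ih1 ih2

lemma r_out {A : Alg Ω ar} {r : A.carrier → A.carrier → Prop} (hr : IsCongr A r)
    (x : A.carrier) : r (Quot.mk r x).out x :=
  congr_of_mk_eq hr (Quot.out_eq _)

lemma quot_eval {A : Alg Ω ar} {r : A.carrier → A.carrier → Prop} (hr : IsCongr A r)
    (w : X → A.carrier) :
    ∀ t : Term Ω ar X, t.eval (A.quot r) (fun x => Quot.mk r (w x)) = Quot.mk r (t.eval A w)
  | .var _ => rfl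
  | .op ω ts => by
      show Quot.mk r (A.interp ω fun i =>
        ((ts i).eval (A.quot r) (fun x => Quot.mk r (w x))).out) = _
      apply Quot.sound
      apply hr.compat
      intro i
      rw [quot_eval hr w (ts i)]
      exact r_out hr _

lemma quot_eval' {A : Alg Ω ar} {r : A.carrier → A.carrier → Prop} (hr : IsCongr A r)
    (v : X → Quot r) (t : Term Ω ar X) :
    t.eval (A.quot r) v = Quot.mk r (t.eval A (fun x => (v x).out)) := by
  conv_lhs => rw [show v = fun x => Quot.mk r ((v x).out) from
    funext fun x => (Quot.out_eq _).symm]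
  exact quot_eval hr _ t

def TAlg (Ω : Type) (ar : Ω → ℕ) : Alg Ω ar := ⟨Term Ω ar ℕ, fun ω ts => .op ω ts⟩

lemma teval_eq_subst (σ : ℕ → Term Ω ar ℕ) :
    ∀ t : Term Ω ar ℕ, t.eval (TAlg Ω ar) σ = t.subst σ
  | .var _ => rfl
  | .op ω ts => congrArg _ (funext fun i => teval_eq_subst σ (ts i))

lemma teval_var : ∀ t : Term Ω ar ℕ, t.eval (TAlg Ω ar) (fun n => .var n) = t
  | .var _ => rfl
  | .op ω ts => congrArg _ (funext fun i => teval_var (ts i))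

lemma VSat.subst {V : Alg Ω ar → Prop} {p q : Term Ω ar X} (h : VSat V p q)
    (σ : X → Term Ω ar Y) : VSat V (p.subst σ) (q.subst σ) := fun A hA v => by
  rw [subst_eval, subst_eval]; exact h A hA _

lemma quot_models {E : Set (Term Ω ar ℕ × Term Ω ar ℕ)} {A : Alg Ω ar}
    {s : A.carrier → A.carrier → Prop} (hs : IsCongr A s)
    (h : ∀ e ∈ E, ∀ w : ℕ → A.carrier, s (e.1.eval A w) (e.2.eval A w)) :
    Models (A.quot s) E := by
  intro e he v
  rw [quot_eval' hs v e.1, quot_eval' hs v e.2]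
  exact Quot.sound (h e he _)

def PRel (V : Alg Ω ar → Prop) (A : Alg Ω ar) (x y : A.carrier) : Prop :=
  ∃ u1 u2 : Term Ω ar ℕ, ∃ w : ℕ → A.carrier,
    VSat V u1 u2 ∧ x = u1.eval A w ∧ y = u2.eval A w

lemma PRel.refl' (V : Alg Ω ar → Prop) (A : Alg Ω ar) (x : A.carrier) : PRel V A x x :=
  ⟨.var 0, .var 0, fun _ => x, fun _ _ _ => rfl, rfl, rfl⟩

lemma PRel.compat {V : Alg Ω ar → Prop} {A : Alg Ω ar} (ω : Ω)
    (f g : Fin (ar ω) → A.carrier) (h : ∀ i, PRel V A (f i) (g i)) :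
    PRel V A (A.interp ω f) (A.interp ω g) := by
  classical
  choose u1 u2 w hu hf hg using h
  refine ⟨.op ω (fun i => (u1 i).subst fun n => .var (Nat.pair i.val n)),
          .op ω (fun i => (u2 i).subst fun n => .var (Nat.pair i.val n)),
          fun m => if hm : (Nat.unpair m).1 < ar ω then w ⟨_, hm⟩ (Nat.unpair m).2
                   else A.interp ω f, ?_, ?_, ?_⟩
  · intro B hB v
    show B.interp ω _ = B.interp ω _
    refine congrArg _ (funext fun i => ?_)
    rw [subst_eval, subst_eval]
    exact hu i B hB _
  · show A.interp ω f = A.interp ω _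
    refine congrArg _ (funext fun i => ?_)
    rw [subst_eval, hf i]
    refine congrFun (congrArg (Term.eval A) (funext fun n => ?_)) (u1 i)
    show w i n = (if hm : (Nat.unpair (Nat.pair i.val n)).1 < ar ω
      then w ⟨_, hm⟩ (Nat.unpair (Nat.pair i.val n)).2 else A.interp ω f)
    simp [Nat.unpair_pair, i.isLt]
  · show A.interp ω g = A.interp ω _
    refine congrArg _ (funext fun i => ?_)
    rw [subst_eval, hg i]
    refine congrFun (congrArg (Term.eval A) (funext fun n => ?_)) (u2 i)
    show w i n = (if hm : (Nat.unpair (Nat.pair i.val n)).1 < ar ω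
      then w ⟨_, hm⟩ (Nat.unpair (Nat.pair i.val n)).2 else A.interp ω f)
    simp [Nat.unpair_pair, i.isLt]

private def hyb {n : ℕ} {α : Type} (f g : Fin n → α) (k : ℕ) : Fin n → α :=
  fun i => if i.val < k then g i else f i

lemma eqvgen_congr (V : Alg Ω ar → Prop) (A : Alg Ω ar) :
    IsCongr A (Relation.EqvGen (PRel V A)) where
  refl a := .refl a
  symm h := .symm _ _ h
  trans h1 h2 := .trans _ _ _ h1 h2
  compat := by
    classical
    intro ω f g h
    have one : ∀ (f : Fin (ar ω) → A.carrier) (j : Fin (ar ω)) (x y : A.carrier),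
        Relation.EqvGen (PRel V A) x y →
        Relation.EqvGen (PRel V A) (A.interp ω (Function.update f j x))
          (A.interp ω (Function.update f j y)) := by
      intro f j x y hxy
      induction hxy with
      | rel x y hxy =>
        refine Relation.EqvGen.rel _ _ (PRel.compat ω _ _ fun i => ?_)
        rcases eq_or_ne i j with rfl | hij
        · simpa using hxy
        · simp only [Function.update_of_ne hij]; exact PRel.refl' V A _
      | refl x => exact .refl _
      | symm _ _ _ ih => exact .symm _ _ ih
      | trans _ _ _ _ _ ih1 ih2 => exact .trans _ _ _ ih1 ih2
    have step : ∀ k (hk : k < ar ω),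
        Relation.EqvGen (PRel V A) (A.interp ω (hyb f g k)) (A.interp ω (hyb f g (k+1))) := by
      intro k hk
      have h1 : hyb f g k = Function.update (hyb f g k) ⟨k, hk⟩ (f ⟨k, hk⟩) := by
        funext i
        rcases eq_or_ne i ⟨k, hk⟩ with rfl | hij
        · simp [hyb]
        · rw [Function.update_of_ne hij]
      have h2 : hyb f g (k+1) = Function.update (hyb f g k) ⟨k, hk⟩ (g ⟨k, hk⟩) := by
        funext i
        rcases eq_or_ne i ⟨k, hk⟩ with rfl | hij
        · simp [hyb]
        · rw [Function.update_of_ne hij]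
          have hiv : i.val ≠ k := fun hh => hij (Fin.ext hh)
          simp only [hyb]
          by_cases h' : i.val < k
          · rw [if_pos h', if_pos (Nat.lt_succ_of_lt h')]
          · rw [if_neg h', if_neg (by omega)]
      rw [h2]
      conv_lhs => rw [h1]
      exact one (hyb f g k) ⟨k, hk⟩ _ _ (h ⟨k, hk⟩)
    have chain : ∀ k, k ≤ ar ω →
        Relation.EqvGen (PRel V A) (A.interp ω f) (A.interp ω (hyb f g k)) := by
      intro k
      induction k with
      | zero =>
        intro _
        have h0 : hyb f g 0 = f := funext fun i => if_neg (Nat.not_lt_zero _)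
        rw [h0]; exact .refl _
      | succ k ih =>
        intro hk
        exact .trans _ _ _ (ih (Nat.le_of_succ_le hk)) (step k hk)
    have hg : hyb f g (ar ω) = g := funext fun i => if_pos i.isLt
    have := chain (ar ω) le_rfl
    rwa [hg] at this

end Aux

/-- a variety `W = Mod E` is term idempotent iff for every algebra `A`,
each class of the `W`-replica congruence of `A` which is not an idempotent of the
quotient is a singleton. -/
theorem stmt_10 {Ω : Type} {ar : Ω → ℕ} (hτ : ∀ ω, 0 < ar ω)
    (E : Set (Term Ω ar ℕ × Term Ω ar ℕ)) :
    TermIdemVariety (VarietyOf E) ↔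
      ∀ (A : Alg Ω ar) (r : A.carrier → A.carrier → Prop),
        IsReplica (VarietyOf E) A r →
        ∀ a : A.carrier, ¬ IsIdem (A.quot r) (Quot.mk r a) →
          ∀ b : A.carrier, r a b → b = a := by
  classical
  constructor
  · -- term idempotent ⇒ non-idempotent classes are singletons
    intro hTI A r hr a hni b hab
    by_contra hba
    apply hni
    have hscongr : IsCongr A (Relation.EqvGen (PRel (VarietyOf E) A)) :=
      eqvgen_congr (VarietyOf E) A
    have hsE : Models (A.quot (Relation.EqvGen (PRel (VarietyOf E) A))) E :=
      quot_models hscongr (fun e he w =>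
        Relation.EqvGen.rel _ _ ⟨e.1, e.2, w, fun M hM v => hM e he v, rfl, rfl⟩)
    have hsab : Relation.EqvGen (PRel (VarietyOf E) A) a b :=
      hr.2.2 _ hscongr hsE a b hab
    have key : ∀ x y, Relation.EqvGen (PRel (VarietyOf E) A) x y →
        Quot.mk r x = Quot.mk r y ∧ (x = y ∨ IsIdem (A.quot r) (Quot.mk r x)) := by
      intro x y hxy
      induction hxy with
      | rel x y hxy =>
        obtain ⟨u1, u2, w, hu, hx, hy⟩ := hxy
        have hq : Quot.mk r x = Quot.mk r y := by
          rw [hx, hy, ← quot_eval hr.1, ← quot_eval hr.1]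
          exact hu _ hr.2.1 _
        refine ⟨hq, ?_⟩
        rcases eq_or_ne x y with rfl | hne
        · exact Or.inl rfl
        right
        have hune : u1 ≠ u2 := by rintro rfl; exact hne (hx.trans hy.symm)
        have hidem : TermIdem (VarietyOf E) u1 := (hTI u1 u2 hu hune).1
        intro ω'
        have h1 : Quot.mk r x = u1.eval (A.quot r) (fun n => Quot.mk r (w n)) := by
          rw [quot_eval hr.1, hx]
        have h2 := hidem ω' _ hr.2.1 (fun n => Quot.mk r (w n))
        rw [h1]
        exact h2
      | refl x => exact ⟨rfl, Or.inl rfl⟩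
      | symm x y _ ih =>
        exact ⟨ih.1.symm, ih.2.elim (fun h => Or.inl h.symm) (fun h => Or.inr (ih.1 ▸ h))⟩
      | trans x y z _ _ ih1 ih2 =>
        refine ⟨ih1.1.trans ih2.1, ?_⟩
        rcases ih1.2 with rfl | h
        · exact ih2.2
        · exact Or.inr h
    rcases (key a b hsab).2 with h | h
    · exact absurd h.symm hba
    · exact h
  · -- singleton condition ⇒ term idempotent
    intro hcond p q hpq hne
    set r : Term Ω ar ℕ → Term Ω ar ℕ → Prop :=
      fun p q => VSat (VarietyOf E) p q with hrdef
    have hrc : IsCongr (TAlg Ω ar) r :=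
      { refl := fun _ B _ _ => rfl
        symm := fun h B hB v => (h B hB v).symm
        trans := fun h1 h2 B hB v => (h1 B hB v).trans (h2 B hB v)
        compat := fun ω f g h B hB v =>
          show B.interp ω _ = B.interp ω _ from
            congrArg _ (funext fun i => h i B hB v) }
    have hrE : Models ((TAlg Ω ar).quot r) E := by
      refine quot_models hrc (fun e he w => ?_)
      show VSat (VarietyOf E) (e.1.eval (TAlg Ω ar) w) (e.2.eval (TAlg Ω ar) w)
      rw [teval_eq_subst w e.1, teval_eq_subst w e.2]
      exact VSat.subst (fun M hM v => hM e he v) w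
    have hmin : ∀ s, IsCongr (TAlg Ω ar) s → VarietyOf E ((TAlg Ω ar).quot s) → ∀ a b, r a b → s a b := by
      intro s hs hsE a b hab
      apply congr_of_mk_eq hs
      have h0 := hab ((TAlg Ω ar).quot s) hsE (fun n => Quot.mk s (Term.var n))
      rw [quot_eval hs (fun n => Term.var n) a, quot_eval hs (fun n => Term.var n) b, teval_var a, teval_var b] at h0
      exact h0
    have hrep : IsReplica (VarietyOf E) (TAlg Ω ar) r := ⟨hrc, hrE, hmin⟩
    have hidem : ∀ t t' : Term Ω ar ℕ, VSat (VarietyOf E) t t' → t ≠ t' →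
        TermIdem (VarietyOf E) t := by
      intro t t' h hne'
      have hni : IsIdem ((TAlg Ω ar).quot r) (Quot.mk r t) := by
        by_contra hni
        exact hne' ((hcond (TAlg Ω ar) r hrep t hni t' h).symm)
      intro ω
      have h2 := hni ω
      have h3 : r (Term.op ω fun _ => (Quot.mk r t).out) t := congr_of_mk_eq hrc h2
      have h4 : r (Term.op ω fun _ => t) (Term.op ω fun _ => (Quot.mk r t).out) :=
        hrc.compat ω _ _ (fun _ => hrc.symm (r_out hrc t))
      exact hrc.trans h4 h3
    exact ⟨hidem p q hpq hne, hidem q p (fun B hB v => (hpq B hB v).symm) hne.symm⟩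
end

section
/- Let V be a purely polarized variety (polarized and term idempotent) with polar term p(x). Then for distinct terms u, v: V satisfies u = v if and only if V satisfies both u = p(x) and v = p(x). -/
variable {Ω : Type} {ar : Ω → ℕ} {X Y : Type}

/-- `u` is a constant term of `V`: `V ⊨ u(x₁,…,xₙ) = u(y₁,…,yₙ)`. -/
def ConstTerm {Ω : Type} {ar : Ω → ℕ} (V : Alg Ω ar → Prop) (u : Term Ω ar ℕ) : Prop :=
  VSat V (u.subst fun n => .var (2 * n)) (u.subst fun n => .var (2 * n + 1))

/-- A polar term of `V`: a constant unary term idempotent. -/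
def IsPolar {Ω : Type} {ar : Ω → ℕ} (V : Alg Ω ar → Prop) (p : Term Ω ar ℕ) : Prop :=
  p.varSet ⊆ {0} ∧ ConstTerm V p ∧ TermIdem V p

theorem eval_subst (A : Alg Ω ar) (σ : X → Term Ω ar Y) (w : Y → A.carrier) :
    ∀ t : Term Ω ar X, (t.subst σ).eval A w = t.eval A (fun x => (σ x).eval A w)
  | .var x => rfl
  | .op ω ts => by
      simp only [Term.subst, Term.eval]
      congr 1
      funext i
      exact eval_subst A σ w (ts i)

theorem const_eval {V : Alg Ω ar → Prop} {q : Term Ω ar ℕ} (hc : ConstTerm V q)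
    {A : Alg Ω ar} (hA : V A) (w w' : ℕ → A.carrier) :
    q.eval A w = q.eval A w' := by
  have h := hc A hA (fun m => if m % 2 = 0 then w (m / 2) else w' (m / 2))
  rw [eval_subst, eval_subst] at h
  simp only [Term.eval] at h
  convert h using 2 <;> funext n
  · have h1 : 2 * n % 2 = 0 := by omega
    have h2 : 2 * n / 2 = n := by omega
    simp [h1, h2]
  · have h1 : ¬ (2 * n + 1) % 2 = 0 := by omega
    have h2 : (2 * n + 1) / 2 = n := by omega
    simp [h1, h2]

theorem subst_idem {V : Alg Ω ar → Prop} {u : Term Ω ar ℕ} (hu : TermIdem V u)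
    {A : Alg Ω ar} (hA : V A) (w : ℕ → A.carrier) :
    ∀ t : Term Ω ar ℕ, (t.subst fun _ => u).eval A w = u.eval A w
  | .var x => rfl
  | .op ω ts => by
      have h1 : (Term.op ω fun i => (ts i).subst fun _ => u).eval A w
          = (Term.op ω fun _ : Fin (ar ω) => u).eval A w := by
        simp only [Term.eval]
        congr 1
        funext i
        exact subst_idem hu hA w (ts i)
      simpa only [Term.subst] using h1.trans (hu ω A hA w)

/-- in a purely polarized variety `V` with polar term `p`, for distinct
terms `u, v`: `V ⊨ u = v` iff `V ⊨ u = p(x)` and `V ⊨ v = p(x)`. -/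
theorem stmt_16 {Ω : Type} {ar : Ω → ℕ} (hτ : ∀ ω, 0 < ar ω)
    (V : Alg Ω ar → Prop) (hti : TermIdemVariety V)
    (p : Term Ω ar ℕ) (hp : IsPolar V p)
    (u v : Term Ω ar ℕ) (huv : u ≠ v) :
    VSat V u v ↔ (VSat V u p ∧ VSat V v p) := by
  obtain ⟨-, hconst, -⟩ := hp
  constructor
  · intro hsat
    obtain ⟨hu, hv⟩ := hti u v hsat huv
    have key : ∀ t : Term Ω ar ℕ, TermIdem V t → VSat V t p := by
      intro t ht A hA w
      have h1 := subst_idem ht hA w p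
      have h2 := eval_subst A (fun _ : ℕ => t) w p
      have h3 := const_eval hconst hA (fun _ => t.eval A w) w
      calc t.eval A w = (p.subst fun _ => t).eval A w := h1.symm
        _ = p.eval A (fun _ => t.eval A w) := h2
        _ = p.eval A w := h3
    exact ⟨key u hu, key v hv⟩
  · rintro ⟨h1, h2⟩ A hA w
    rw [h1 A hA w, h2 A hA w]
end
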